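/- arXiv:2002.09531 — 3 statements merged into one kernel-verified Lean document; each statement's English description precedes it below -/
import Mathlib

section
/- For any 0 < p < q < r < ∞ and any constants C_p, C_q, C_r > 0, there exist ε, δ > 0 such that for any measurable function f : ℝ → ℝ satisfying ‖f‖_{L^p} ≤ C_p, ‖f‖_{L^q} ≥ C_q, and ‖f‖_{L^r} ≤ C_r, one has |{x : |f(x)| > ε}| ≥ δ. -/
/-!
Split `∫ |f|^q` at the height `ε`. Where `|f| ≤ ε` we have `|f|^q ≤ ε^(q-p) |f|^p`, so that
part is at most `ε^(q-p) Cp^p`, which is `Cq^q / 2` for a suitable `ε`. On `A = {ε < |f|}`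
Hölder's inequality between `L^q` and `L^r` gives `∫_A |f|^q ≤ Cr^q |A|^(1 - q/r)`. Hence
`Cq^q / 2 ≤ Cr^q |A|^(1 - q/r)`, a lower bound on `|A|` depending only on the constants.
-/

open MeasureTheory
open scoped ENNReal

namespace MeasureTheory

variable {α E : Type*} [MeasurableSpace α] [NormedAddCommGroup E] {μ : Measure α} {f : α → E}
  {p q r ε : ℝ}

lemma eLpNorm_ofReal_eq_eLpNorm' (hp : 0 < p) :
    eLpNorm f (ENNReal.ofReal p) μ = eLpNorm' f p μ := by
  rw [eLpNorm_eq_eLpNorm' (by simpa using hp) ENNReal.ofReal_ne_top, ENNReal.toReal_ofReal hp.le]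

lemma setLIntegral_rpow_enorm_le (hq : 0 < q) (hqr : q ≤ r) (hf : AEStronglyMeasurable f μ)
    (s : Set α) :
    ∫⁻ x in s, ‖f x‖ₑ ^ q ∂μ ≤ eLpNorm' f r μ ^ q * μ s ^ (1 - q / r) := by
  have hr : 0 < r := hq.trans_le hqr
  have holder :=
    eLpNorm'_le_eLpNorm'_mul_rpow_measure_univ hq hqr hf.restrict (μ := μ.restrict s)
  rw [Measure.restrict_apply_univ] at holder
  calc ∫⁻ x in s, ‖f x‖ₑ ^ q ∂μ = eLpNorm' f q (μ.restrict s) ^ q :=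
        lintegral_rpow_enorm_eq_rpow_eLpNorm' hq
    _ ≤ (eLpNorm' f r μ * μ s ^ (1 / q - 1 / r)) ^ q := by
        gcongr
        exact holder.trans (mul_le_mul_of_nonneg_right
          (eLpNorm'_mono_measure f Measure.restrict_le_self hr.le) zero_le)
    _ = eLpNorm' f r μ ^ q * μ s ^ (1 - q / r) := by
        rw [ENNReal.mul_rpow_of_nonneg _ _ hq.le, ← ENNReal.rpow_mul]
        congr 2
        field_simp

lemma eLpNorm'_rpow_le_add (hp : 0 < p) (hpq : p < q) (hqr : q < r)
    (hf : AEStronglyMeasurable f μ) :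
    eLpNorm' f q μ ^ q ≤ ENNReal.ofReal ε ^ (q - p) * eLpNorm' f p μ ^ p +
      eLpNorm' f r μ ^ q * μ {x | ε < ‖f x‖} ^ (1 - q / r) := by
  set A := {x | ε < ‖f x‖}
  have hA : NullMeasurableSet A μ := nullMeasurableSet_lt aemeasurable_const hf.norm.aemeasurable
  have pointwise (x : α) : ‖f x‖ₑ ^ q ≤
      ENNReal.ofReal ε ^ (q - p) * ‖f x‖ₑ ^ p + A.indicator (‖f ·‖ₑ ^ q) x := by
    by_cases hx : x ∈ A
    · simp [Set.indicator_of_mem hx]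
    · have hfx : ‖f x‖ₑ ≤ ENNReal.ofReal ε := by
        rw [← ofReal_norm]
        exact ENNReal.ofReal_le_ofReal (not_lt.mp hx)
      rw [Set.indicator_of_notMem hx, add_zero, ← sub_add_cancel q p,
        ENNReal.rpow_add_of_nonneg _ _ (sub_nonneg.mpr hpq.le) hp.le, sub_add_cancel]
      gcongr
  have hfp : AEMeasurable (fun x ↦ ‖f x‖ₑ ^ p) μ := hf.enorm.pow_const p
  calc eLpNorm' f q μ ^ q = ∫⁻ x, ‖f x‖ₑ ^ q ∂μ :=
        (lintegral_rpow_enorm_eq_rpow_eLpNorm' (hp.trans hpq)).symm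
    _ ≤ ∫⁻ x, ENNReal.ofReal ε ^ (q - p) * ‖f x‖ₑ ^ p + A.indicator (‖f ·‖ₑ ^ q) x ∂μ :=
        lintegral_mono pointwise
    _ = ENNReal.ofReal ε ^ (q - p) * ∫⁻ x, ‖f x‖ₑ ^ p ∂μ + ∫⁻ x in A, ‖f x‖ₑ ^ q ∂μ := by
        rw [lintegral_add_left' (hfp.const_mul _), lintegral_const_mul'' _ hfp,
          lintegral_indicator₀ hA]
    _ ≤ _ := by
        rw [lintegral_rpow_enorm_eq_rpow_eLpNorm' hp]
        gcongr
        exact setLIntegral_rpow_enorm_le (hp.trans hpq) hqr.le hf A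

lemma ofReal_le_measure_setOf_lt_norm {Cp Cq Cr : ℝ} (hp : 0 < p) (hpq : p < q) (hqr : q < r)
    (hε : 0 ≤ ε) (hCp : 0 ≤ Cp) (hCq : 0 < Cq) (hCr : 0 < Cr)
    (hεC : ε ^ (q - p) * Cp ^ p ≤ Cq ^ q / 2)
    (hf : AEStronglyMeasurable f μ) (hfp : eLpNorm' f p μ ≤ ENNReal.ofReal Cp)
    (hfq : ENNReal.ofReal Cq ≤ eLpNorm' f q μ) (hfr : eLpNorm' f r μ ≤ ENNReal.ofReal Cr) :
    ENNReal.ofReal ((Cq ^ q / (2 * Cr ^ q)) ^ (r / (r - q))) ≤ μ {x | ε < ‖f x‖} := by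
  have hq : 0 < q := hp.trans hpq
  have hr : 0 < r := hq.trans hqr
  have hrq : 0 < r - q := sub_pos.mpr hqr
  set m := μ {x | ε < ‖f x‖} ^ (1 - q / r)
  have below_ε :
      ENNReal.ofReal ε ^ (q - p) * eLpNorm' f p μ ^ p ≤ ENNReal.ofReal (Cq ^ q / 2) :=
    calc ENNReal.ofReal ε ^ (q - p) * eLpNorm' f p μ ^ p
        ≤ ENNReal.ofReal ε ^ (q - p) * ENNReal.ofReal Cp ^ p := by gcongr
      _ = ENNReal.ofReal (ε ^ (q - p) * Cp ^ p) := by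
        rw [ENNReal.ofReal_rpow_of_nonneg hε (sub_nonneg.mpr hpq.le),
          ENNReal.ofReal_rpow_of_nonneg hCp hp.le, ENNReal.ofReal_mul (by positivity)]
      _ ≤ ENNReal.ofReal (Cq ^ q / 2) := ENNReal.ofReal_le_ofReal hεC
  have above_ε : ENNReal.ofReal (Cq ^ q / 2) ≤ ENNReal.ofReal (Cr ^ q) * m := by
    refine ENNReal.le_of_add_le_add_left (ENNReal.ofReal_ne_top (r := Cq ^ q / 2)) ?_
    calc ENNReal.ofReal (Cq ^ q / 2) + ENNReal.ofReal (Cq ^ q / 2)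
        = ENNReal.ofReal Cq ^ q := by
          rw [← ENNReal.ofReal_add (by positivity) (by positivity), add_halves,
            ENNReal.ofReal_rpow_of_pos hCq]
      _ ≤ eLpNorm' f q μ ^ q := by gcongr
      _ ≤ ENNReal.ofReal ε ^ (q - p) * eLpNorm' f p μ ^ p + eLpNorm' f r μ ^ q * m :=
          eLpNorm'_rpow_le_add hp hpq hqr hf
      _ ≤ ENNReal.ofReal (Cq ^ q / 2) + ENNReal.ofReal (Cr ^ q) * m := by
          rw [← ENNReal.ofReal_rpow_of_pos hCr]
          gcongr
  have ratio : ENNReal.ofReal (Cq ^ q / (2 * Cr ^ q)) ≤ m := by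
    rw [← div_div, ENNReal.ofReal_div_of_pos (by positivity),
      ENNReal.div_le_iff_le_mul (.inl (by positivity)) (.inl ENNReal.ofReal_ne_top)]
    rwa [mul_comm]
  calc ENNReal.ofReal ((Cq ^ q / (2 * Cr ^ q)) ^ (r / (r - q)))
      = ENNReal.ofReal (Cq ^ q / (2 * Cr ^ q)) ^ (r / (r - q)) :=
        (ENNReal.ofReal_rpow_of_nonneg (by positivity) (by positivity)).symm
    _ ≤ m ^ (r / (r - q)) := by gcongr
    _ = μ {x | ε < ‖f x‖} := by
        rw [← ENNReal.rpow_mul, show (1 - q / r) * (r / (r - q)) = 1 by field_simp,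
          ENNReal.rpow_one]

end MeasureTheory

/-- The `pqr` theorem: if `0 < p < q < r < ∞`, upper bounds on the `L^p` and `L^r`
norms together with a lower bound on the `L^q` norm give a uniform lower bound on
the measure of a superlevel set. -/
theorem pqr_theorem (p q r : ℝ) (hp : 0 < p) (hpq : p < q) (hqr : q < r)
    (Cp Cq Cr : ℝ) (hCp : 0 < Cp) (hCq : 0 < Cq) (hCr : 0 < Cr) :
    ∃ ε > (0 : ℝ), ∃ δ > (0 : ℝ), ∀ f : ℝ → ℝ,
      AEStronglyMeasurable f volume →
      eLpNorm f (ENNReal.ofReal p) volume ≤ ENNReal.ofReal Cp →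
      ENNReal.ofReal Cq ≤ eLpNorm f (ENNReal.ofReal q) volume →
      eLpNorm f (ENNReal.ofReal r) volume ≤ ENNReal.ofReal Cr →
      ENNReal.ofReal δ ≤ volume {x | ε < |f x|} := by
  have hq : 0 < q := hp.trans hpq
  have hqp : 0 < q - p := sub_pos.mpr hpq
  have hrq : 0 < r - q := sub_pos.mpr hqr
  set ε := (Cq ^ q / (2 * Cp ^ p)) ^ (1 / (q - p))
  have hεC : ε ^ (q - p) * Cp ^ p = Cq ^ q / 2 := by
    rw [← Real.rpow_mul (by positivity), one_div_mul_cancel hqp.ne', Real.rpow_one]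
    field_simp
  refine ⟨ε, by positivity, (Cq ^ q / (2 * Cr ^ q)) ^ (r / (r - q)), by positivity,
    fun f hf hfp hfq hfr ↦ ?_⟩
  rw [eLpNorm_ofReal_eq_eLpNorm' hp] at hfp
  rw [eLpNorm_ofReal_eq_eLpNorm' hq] at hfq
  rw [eLpNorm_ofReal_eq_eLpNorm' (hq.trans hqr)] at hfr
  exact ofReal_le_measure_setOf_lt_norm hp hpq hqr (by positivity) hCp.le hCq hCr hεC.le hf
    hfp hfq hfr
end

section
/- Let (φ, ψ) be a smooth, exponentially decaying solution of φ'' − φ + f(φ,ψ) = 0, ψ'' − ψ + g(φ,ψ) = 0, with all derivatives decaying. Then ‖(φ,ψ)‖²_{L²×L²} − ‖(φ',ψ')‖²_{L²×L²} = 2∫ H(φ,ψ) dx. -/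
open MeasureTheory

/-- The coupling function `H` of the gKdV system. -/
noncomputable def Hfun (k : ℕ) (a b c d u v : ℝ) : ℝ :=
  a / (2 * (k : ℝ) + 2) * (u ^ (2 * k + 2) + v ^ (2 * k + 2))
    + b / ((k : ℝ) + 1) * (u * v) ^ (k + 1)
    + c / (k : ℝ) * (u ^ (k + 2) * v ^ k)
    + d / (k : ℝ) * (u ^ k * v ^ (k + 2))

/-- `f = H_u`. -/
noncomputable def ffun (k : ℕ) (a b c d u v : ℝ) : ℝ :=
  a * u ^ (2 * k + 1) + b * u ^ k * v ^ (k + 1)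
    + ((k : ℝ) + 2) / (k : ℝ) * c * u ^ (k + 1) * v ^ k
    + d * u ^ (k - 1) * v ^ (k + 2)

/-- `g = H_v`. -/
noncomputable def gfun (k : ℕ) (a b c d u v : ℝ) : ℝ :=
  a * v ^ (2 * k + 1) + b * v ^ k * u ^ (k + 1)
    + ((k : ℝ) + 2) / (k : ℝ) * d * v ^ (k + 1) * u ^ k
    + c * v ^ (k - 1) * u ^ (k + 2)

open Set Filter in
lemma integrable_exp_neg_abs' {δ : ℝ} (hδ : 0 < δ) :
    Integrable (fun x : ℝ => Real.exp (-δ * |x|)) := by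
  have h1 : IntegrableOn (fun x : ℝ => Real.exp (-δ * |x|)) (Ioi 0) :=
    (exp_neg_integrableOn_Ioi 0 hδ).congr_fun
      (fun x hx => by rw [abs_of_pos (mem_Ioi.1 hx)]) measurableSet_Ioi
  have h1' : IntegrableOn (fun x : ℝ => Real.exp (-δ * |x|)) (Ici 0) :=
    (integrableOn_Ici_iff_integrableOn_Ioi enorm_ne_top).2 h1
  have h2 : IntegrableOn (fun x : ℝ => Real.exp (-δ * |x|)) (Iic 0) := by
    have hemb : MeasurableEmbedding (Neg.neg : ℝ → ℝ) :=
      (Homeomorph.neg ℝ).measurableEmbedding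
    have hmap : (volume : Measure ℝ).restrict (Iic 0)
        = ((volume : Measure ℝ).restrict (Ici 0)).map Neg.neg := by
      have hpre : (Neg.neg : ℝ → ℝ) ⁻¹' (Iic 0) = Ici 0 := by ext x; simp
      conv_lhs => rw [← Measure.map_neg_eq_self (volume : Measure ℝ)]
      rw [hemb.restrict_map, hpre]
    rw [IntegrableOn, hmap, hemb.integrable_map_iff]
    apply h1'.congr_fun _ measurableSet_Ici
    intro x _; simp [Function.comp]
  have := h2.union h1
  rwa [Iic_union_Ioi, integrableOn_univ] at this

open Set Filter in
set_option maxHeartbeats 1000000 in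
/-- Second Pohozaev identity: for a smooth exponentially decaying solution of the
elliptic system, `‖(φ,ψ)‖²_{L²×L²} − ‖(φ',ψ')‖²_{L²×L²} = 2∫H(φ,ψ)`. -/
theorem pohozaev_two (k : ℕ) (hk : 1 ≤ k) (a b c d : ℝ)
    (ha : 0 ≤ a) (hb : 0 ≤ b) (hc : 0 ≤ c) (hd : 0 ≤ d)
    (φ ψ : ℝ → ℝ) (hφ : ContDiff ℝ (⊤ : ℕ∞) φ) (hψ : ContDiff ℝ (⊤ : ℕ∞) ψ)
    (heq1 : ∀ x, deriv (deriv φ) x - φ x + ffun k a b c d (φ x) (ψ x) = 0)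
    (heq2 : ∀ x, deriv (deriv ψ) x - ψ x + gfun k a b c d (φ x) (ψ x) = 0)
    (hdec : ∃ C > (0 : ℝ), ∃ δ > (0 : ℝ), ∀ x : ℝ,
      |φ x| + |deriv φ x| + |deriv (deriv φ) x|
        + |ψ x| + |deriv ψ x| + |deriv (deriv ψ) x| ≤ C * Real.exp (-δ * |x|)) :
    (∫ x, ((φ x) ^ 2 + (ψ x) ^ 2)) - (∫ x, ((deriv φ x) ^ 2 + (deriv ψ x) ^ 2))
      = 2 * ∫ x, Hfun k a b c d (φ x) (ψ x) := by
  obtain ⟨C, hC, δ, hδ, hbound⟩ := hdec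
  obtain ⟨m, rfl⟩ : ∃ m, k = m + 1 := ⟨k - 1, (Nat.succ_pred_eq_of_pos hk).symm⟩
  set k := m + 1 with hkdef
  have hkR : ((k : ℕ) : ℝ) ≠ 0 := by positivity
  have hφd : Differentiable ℝ φ := hφ.differentiable (by simp)
  have hψd : Differentiable ℝ ψ := hψ.differentiable (by simp)
  have htop : (((⊤ : ℕ∞) : WithTop ℕ∞) + 1) = ((⊤ : ℕ∞) : WithTop ℕ∞) := rfl
  have hφ'c : ContDiff ℝ (⊤ : ℕ∞) (deriv φ) := (contDiff_succ_iff_deriv.1 (htop ▸ hφ)).2.2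
  have hψ'c : ContDiff ℝ (⊤ : ℕ∞) (deriv ψ) := (contDiff_succ_iff_deriv.1 (htop ▸ hψ)).2.2
  have hφ'd : Differentiable ℝ (deriv φ) := hφ'c.differentiable (by simp)
  have hψ'd : Differentiable ℝ (deriv ψ) := hψ'c.differentiable (by simp)
  -- derivative of x ↦ H(φ x, ψ x)
  have key : ∀ x, HasDerivAt (fun x => Hfun k a b c d (φ x) (ψ x))
      (ffun k a b c d (φ x) (ψ x) * deriv φ x + gfun k a b c d (φ x) (ψ x) * deriv ψ x) x := by
    intro x
    have hu : HasDerivAt φ (deriv φ x) x := (hφd x).hasDerivAt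
    have hv : HasDerivAt ψ (deriv ψ x) x := (hψd x).hasDerivAt
    have H :=
      (((((hu.pow (2*k+2)).add (hv.pow (2*k+2))).const_mul (a / (2*(k:ℝ)+2))).add
        (((hu.mul hv).pow (k+1)).const_mul (b / ((k:ℝ)+1)))).add
        (((hu.pow (k+2)).mul (hv.pow k)).const_mul (c / (k:ℝ)))).add
        (((hu.pow k).mul (hv.pow (k+2))).const_mul (d / (k:ℝ)))
    have heq : (a / (2*(k:ℝ)+2) * ((2*k+2 : ℕ) * φ x ^ (2*k+2-1) * deriv φ x
          + (2*k+2 : ℕ) * ψ x ^ (2*k+2-1) * deriv ψ x)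
        + b / ((k:ℝ)+1) * ((k+1 : ℕ) * (φ x * ψ x) ^ (k+1-1)
            * (deriv φ x * ψ x + φ x * deriv ψ x))
        + (c / (k:ℝ) * (((k+2 : ℕ) * φ x ^ (k+2-1) * deriv φ x) * ψ x ^ k
            + φ x ^ (k+2) * ((k : ℕ) * ψ x ^ (k-1) * deriv ψ x)))
        + (d / (k:ℝ) * (((k : ℕ) * φ x ^ (k-1) * deriv φ x) * ψ x ^ (k+2)
            + φ x ^ k * ((k+2 : ℕ) * ψ x ^ (k+2-1) * deriv ψ x))))
        = ffun k a b c d (φ x) (ψ x) * deriv φ x + gfun k a b c d (φ x) (ψ x) * deriv ψ x := by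
      simp only [ffun, gfun, hkdef]
      have e1 : 2*(m+1)+2-1 = 2*(m+1)+1 := by omega
      have e2 : m+1+1-1 = m+1 := by omega
      have e3 : m+1+2-1 = m+1+1 := by omega
      have e4 : m+1-1 = m := by omega
      rw [e1, e2, e3, e4]
      push_cast
      have hm : ((m:ℝ)+1) ≠ 0 := by positivity
      field_simp
      ring
    simpa only [Hfun, Pi.add_def, Pi.mul_def, Pi.pow_def, heq] using H
  -- the conserved energy
  set E : ℝ → ℝ := fun x => (deriv φ x) ^ 2 + (deriv ψ x) ^ 2 - (φ x) ^ 2 - (ψ x) ^ 2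
      + 2 * Hfun k a b c d (φ x) (ψ x) with hEdef
  have hE : ∀ x, HasDerivAt E 0 x := by
    intro x
    have hu : HasDerivAt φ (deriv φ x) x := (hφd x).hasDerivAt
    have hv : HasDerivAt ψ (deriv ψ x) x := (hψd x).hasDerivAt
    have huu : HasDerivAt (deriv φ) (deriv (deriv φ) x) x := (hφ'd x).hasDerivAt
    have hvv : HasDerivAt (deriv ψ) (deriv (deriv ψ) x) x := (hψ'd x).hasDerivAt
    have H := ((((huu.pow 2).add (hvv.pow 2)).sub (hu.pow 2)).sub (hv.pow 2)).add
      ((key x).const_mul 2)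
    convert H using 1
    · rfl
    · rfl
    · rfl
    have e1 := heq1 x
    have e2 := heq2 x
    norm_num
    linear_combination (-2 * deriv φ x) * e1 + (-2 * deriv ψ x) * e2
  have hEdiff : Differentiable ℝ E := fun x => (hE x).differentiableAt
  have hconst : ∀ x, E x = E 0 := fun x =>
    is_const_of_deriv_eq_zero hEdiff (fun y => (hE y).deriv) x 0
  -- limits at +∞
  have hexp0 : Tendsto (fun x : ℝ => C * Real.exp (-δ * x)) atTop (nhds 0) := by
    rw [show (0:ℝ) = C * 0 by ring]
    exact (Real.tendsto_exp_atBot.comp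
      (tendsto_id.const_mul_atTop_of_neg (neg_neg_iff_pos.2 hδ))).const_mul C
  have habs : ∀ h : ℝ → ℝ, (∀ x, |h x| ≤ C * Real.exp (-δ * |x|)) →
      Tendsto h atTop (nhds 0) := by
    intro h hh
    apply squeeze_zero_norm' _ hexp0
    filter_upwards [eventually_ge_atTop (0:ℝ)] with x hx
    simpa [Real.norm_eq_abs, abs_of_nonneg hx] using hh x
  have bφ : ∀ x, |φ x| ≤ C * Real.exp (-δ * |x|) := by
    intro x; have := hbound x
    have h1 := abs_nonneg (deriv φ x); have h2 := abs_nonneg (deriv (deriv φ) x)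
    have h3 := abs_nonneg (ψ x); have h4 := abs_nonneg (deriv ψ x)
    have h5 := abs_nonneg (deriv (deriv ψ) x)
    linarith
  have bψ : ∀ x, |ψ x| ≤ C * Real.exp (-δ * |x|) := by
    intro x; have := hbound x
    have h1 := abs_nonneg (deriv φ x); have h2 := abs_nonneg (deriv (deriv φ) x)
    have h3 := abs_nonneg (φ x); have h4 := abs_nonneg (deriv ψ x)
    have h5 := abs_nonneg (deriv (deriv ψ) x)
    linarith
  have bφ' : ∀ x, |deriv φ x| ≤ C * Real.exp (-δ * |x|) := by
    intro x; have := hbound x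
    have h1 := abs_nonneg (φ x); have h2 := abs_nonneg (deriv (deriv φ) x)
    have h3 := abs_nonneg (ψ x); have h4 := abs_nonneg (deriv ψ x)
    have h5 := abs_nonneg (deriv (deriv ψ) x)
    linarith
  have bψ' : ∀ x, |deriv ψ x| ≤ C * Real.exp (-δ * |x|) := by
    intro x; have := hbound x
    have h1 := abs_nonneg (φ x); have h2 := abs_nonneg (deriv (deriv φ) x)
    have h3 := abs_nonneg (ψ x); have h4 := abs_nonneg (deriv φ x)
    have h5 := abs_nonneg (deriv (deriv ψ) x)
    linarith
  have tφ := habs φ bφ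
  have tψ := habs ψ bψ
  have tφ' := habs (deriv φ) bφ'
  have tψ' := habs (deriv ψ) bψ'
  have hHcont : Continuous (fun p : ℝ × ℝ => Hfun k a b c d p.1 p.2) := by
    unfold Hfun; fun_prop
  have tH : Tendsto (fun x => Hfun k a b c d (φ x) (ψ x)) atTop (nhds 0) := by
    have h0 : Hfun k a b c d 0 0 = 0 := by
      simp [Hfun, hkdef, zero_pow]
    have := (hHcont.tendsto (0, 0)).comp (tφ.prodMk_nhds tψ)
    simpa [h0, Function.comp_def] using this
  have tE : Tendsto E atTop (nhds 0) := by
    have := ((((tφ'.pow 2).add (tψ'.pow 2)).sub (tφ.pow 2)).sub (tψ.pow 2)).add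
      (tH.const_mul 2)
    simpa [hEdef] using this
  have hE0 : E 0 = 0 := by
    have : Tendsto E atTop (nhds (E 0)) := by
      have : E = fun _ => E 0 := funext hconst
      rw [this]; exact tendsto_const_nhds
    exact tendsto_nhds_unique this tE
  have hpt : ∀ x, (φ x) ^ 2 + (ψ x) ^ 2 - ((deriv φ x) ^ 2 + (deriv ψ x) ^ 2)
      = 2 * Hfun k a b c d (φ x) (ψ x) := by
    intro x
    have h := hconst x
    rw [hE0] at h
    simp only [hEdef] at h
    linarith
  -- integrability
  have sqle : ∀ y x : ℝ, |y| ≤ C * Real.exp (-δ * |x|) →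
      y ^ 2 ≤ C ^ 2 * Real.exp (-δ * |x|) := by
    intro y x hy
    have he : (0:ℝ) < Real.exp (-δ * |x|) := Real.exp_pos _
    have hle : Real.exp (-δ * |x|) ≤ 1 :=
      Real.exp_le_one_iff.2 (by nlinarith [abs_nonneg x])
    calc y ^ 2 = |y| ^ 2 := (sq_abs y).symm
      _ ≤ (C * Real.exp (-δ * |x|)) ^ 2 := pow_le_pow_left₀ (abs_nonneg y) hy 2
      _ = C ^ 2 * Real.exp (-δ * |x|) * Real.exp (-δ * |x|) := by ring
      _ ≤ C ^ 2 * Real.exp (-δ * |x|) * 1 := by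
          exact mul_le_mul_of_nonneg_left hle (by positivity)
      _ = C ^ 2 * Real.exp (-δ * |x|) := by ring
  have hexpint : Integrable (fun x : ℝ => (2 * C ^ 2) * Real.exp (-δ * |x|)) :=
    (integrable_exp_neg_abs' hδ).const_mul _
  have hint1 : Integrable (fun x => (φ x) ^ 2 + (ψ x) ^ 2) := by
    apply hexpint.mono' (((hφ.continuous.pow 2).add (hψ.continuous.pow 2)).aestronglyMeasurable)
    filter_upwards with x
    have hφ2 := sqle (φ x) x (bφ x)
    have hψ2 := sqle (ψ x) x (bψ x)
    simp only [Pi.add_apply, Pi.pow_apply]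
    rw [Real.norm_eq_abs, abs_of_nonneg (by positivity)]
    linarith
  have hint2 : Integrable (fun x => (deriv φ x) ^ 2 + (deriv ψ x) ^ 2) := by
    apply hexpint.mono'
      (((hφ'c.continuous.pow 2).add (hψ'c.continuous.pow 2)).aestronglyMeasurable)
    filter_upwards with x
    have hφ2 := sqle (deriv φ x) x (bφ' x)
    have hψ2 := sqle (deriv ψ x) x (bψ' x)
    simp only [Pi.add_apply, Pi.pow_apply]
    rw [Real.norm_eq_abs, abs_of_nonneg (by positivity)]
    linarith
  -- conclude
  rw [← integral_sub hint1 hint2]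
  have : (fun x => ((φ x) ^ 2 + (ψ x) ^ 2) - ((deriv φ x) ^ 2 + (deriv ψ x) ^ 2))
      = fun x => 2 * Hfun k a b c d (φ x) (ψ x) := funext hpt
  rw [this, integral_const_mul]
end

section
/- Let k ≥ 2 be even, a > 0, b > 0, and define on ℝ² the function F(x,y) = a(x^{2k+2} + y^{2k+2}) + 2b x^{k+1} y^{k+1}. If a(2^k − 1) < b then the maximum of F on the quarter circle Z = {(x,y) : x² + y² = 1, x ≥ 0, y ≥ 0} is attained only at the point (1/√2, 1/√2), with maximum value (a+b)/2^k. -/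
lemma pow_sum_aux (d : ℝ) (hd : d ^ 2 ≤ 1) : ∀ n : ℕ, 1 ≤ n →
    (1 + d) ^ n + (1 - d) ^ n ≤ 2 + ((2:ℝ) ^ n - 2) * d ^ 2 ∧
    d * ((1 + d) ^ n - (1 - d) ^ n) ≤ (2:ℝ) ^ n * d ^ 2 := by
  intro n hn
  induction n, hn using Nat.le_induction with
  | base => constructor <;> nlinarith [sq_nonneg d]
  | succ n hn ih =>
    obtain ⟨h1, h2⟩ := ih
    have h2n : (2:ℝ) ≤ 2 ^ n := by
      calc (2:ℝ) = 2 ^ 1 := by norm_num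
      _ ≤ 2 ^ n := pow_le_pow_right₀ (by norm_num) hn
    have hf : (1 + d) ^ n + (1 - d) ^ n ≤ (2:ℝ) ^ n := by nlinarith
    have hpow : (2:ℝ) ^ (n + 1) = 2 * 2 ^ n := by rw [pow_succ]; ring
    constructor
    · have he : (1 + d) ^ (n + 1) + (1 - d) ^ (n + 1)
          = ((1 + d) ^ n + (1 - d) ^ n) + d * ((1 + d) ^ n - (1 - d) ^ n) := by ring
      rw [he, hpow]; nlinarith
    · have he : d * ((1 + d) ^ (n + 1) - (1 - d) ^ (n + 1))
          = d * ((1 + d) ^ n - (1 - d) ^ n) + d ^ 2 * ((1 + d) ^ n + (1 - d) ^ n) := by ring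
      rw [he, hpow]
      have h4 : d ^ 2 * ((1 + d) ^ n + (1 - d) ^ n) ≤ d ^ 2 * 2 ^ n :=
        mul_le_mul_of_nonneg_left hf (sq_nonneg d)
      nlinarith

lemma key_bound (k : ℕ) (hk : 2 ≤ k) (a b : ℝ) (ha : 0 < a) (hb : 0 < b)
    (hab : a * (2 ^ k - 1) < b) (x y : ℝ) (hxy : x ^ 2 + y ^ 2 = 1)
    (hx : 0 ≤ x) (hy : 0 ≤ y) :
    a * (x ^ (2 * k + 2) + y ^ (2 * k + 2)) + 2 * b * x ^ (k + 1) * y ^ (k + 1)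
      ≤ (a + b) / 2 ^ k ∧
    (x ≠ y → a * (x ^ (2 * k + 2) + y ^ (2 * k + 2)) + 2 * b * x ^ (k + 1) * y ^ (k + 1)
      < (a + b) / 2 ^ k) := by
  set d : ℝ := x ^ 2 - y ^ 2 with hd_def
  set c : ℝ := 2 * x * y with hc_def
  have hdc : d ^ 2 + c ^ 2 = 1 := by
    have : d ^ 2 + c ^ 2 = (x ^ 2 + y ^ 2) ^ 2 := by rw [hd_def, hc_def]; ring
    rw [this, hxy]; norm_num
  have hd1 : d ^ 2 ≤ 1 := by nlinarith [sq_nonneg c]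
  have hc0 : 0 ≤ c := by positivity
  have hc1 : c ≤ 1 := by nlinarith [sq_nonneg (x - y)]
  -- identities
  have h1d : 1 + d = 2 * x ^ 2 := by rw [hd_def]; linarith
  have h2d : 1 - d = 2 * y ^ 2 := by rw [hd_def]; linarith
  have hS : (1 + d) ^ (k + 1) + (1 - d) ^ (k + 1)
      = 2 ^ (k + 1) * (x ^ (2 * k + 2) + y ^ (2 * k + 2)) := by
    rw [h1d, h2d, mul_pow, mul_pow, show 2 * k + 2 = 2 * (k + 1) by ring,
      pow_mul, pow_mul]
    ring
  have hC : c ^ (k + 1) = 2 ^ (k + 1) * (x ^ (k + 1) * y ^ (k + 1)) := by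
    rw [hc_def]
    rw [show 2 * x * y = 2 * (x * y) by ring, mul_pow, mul_pow]
  -- bounds
  obtain ⟨hf, -⟩ := pow_sum_aux d hd1 (k + 1) (by omega)
  have hck : c ^ (k + 1) ≤ c ^ 2 := pow_le_pow_of_le_one hc0 hc1 (by omega)
  have hpow : (2:ℝ) ^ (k + 1) = 2 * 2 ^ k := by rw [pow_succ]; ring
  have h2k : (0:ℝ) < 2 ^ k := by positivity
  rw [hS, hpow] at hf
  rw [hpow] at hC
  -- main estimate:
  have hS' : a * (2 * 2 ^ k * (x ^ (2 * k + 2) + y ^ (2 * k + 2)))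
      ≤ a * (2 + (2 * 2 ^ k - 2) * d ^ 2) := mul_le_mul_of_nonneg_left hf ha.le
  have hC' : b * (2 * 2 ^ k * (x ^ (k + 1) * y ^ (k + 1))) ≤ b * c ^ 2 := by
    rw [← hC]; exact mul_le_mul_of_nonneg_left hck hb.le
  have habd : a * (2 ^ k - 1) * d ^ 2 ≤ b * d ^ 2 :=
    mul_le_mul_of_nonneg_right hab.le (sq_nonneg d)
  constructor
  · rw [le_div_iff₀ h2k]; nlinarith
  · intro hne
    have hdne : d ≠ 0 := by
      intro h0
      apply hne
      have : x ^ 2 = y ^ 2 := by rw [hd_def] at h0; linarith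
      nlinarith
    have hd2 : 0 < d ^ 2 := by positivity
    have habd' : a * (2 ^ k - 1) * d ^ 2 < b * d ^ 2 :=
      mul_lt_mul_of_pos_right hab hd2
    have hbdc : b * d ^ 2 + b * c ^ 2 = b := by rw [← mul_add, hdc, mul_one]
    rw [lt_div_iff₀ h2k]; linarith [hS', hC', habd', hbdc]

/-- If `a(2^k − 1) < b`, the maximum of `F(x,y) = a(x^{2k+2}+y^{2k+2}) + 2b x^{k+1}y^{k+1}`
on the quarter circle is `(a+b)/2^k`, attained only at `(1/√2, 1/√2)`. -/
theorem max_on_quarter_circle (k : ℕ) (hk : 2 ≤ k) (hke : Even k)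
    (a b : ℝ) (ha : 0 < a) (hb : 0 < b) (hab : a * (2 ^ k - 1) < b) :
    (∀ x y : ℝ, x ^ 2 + y ^ 2 = 1 → 0 ≤ x → 0 ≤ y →
      a * (x ^ (2 * k + 2) + y ^ (2 * k + 2)) + 2 * b * x ^ (k + 1) * y ^ (k + 1)
        ≤ (a + b) / 2 ^ k) ∧
    (a * (((Real.sqrt 2)⁻¹) ^ (2 * k + 2) + ((Real.sqrt 2)⁻¹) ^ (2 * k + 2))
        + 2 * b * ((Real.sqrt 2)⁻¹) ^ (k + 1) * ((Real.sqrt 2)⁻¹) ^ (k + 1)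
      = (a + b) / 2 ^ k) ∧
    (∀ x y : ℝ, x ^ 2 + y ^ 2 = 1 → 0 ≤ x → 0 ≤ y →
      a * (x ^ (2 * k + 2) + y ^ (2 * k + 2)) + 2 * b * x ^ (k + 1) * y ^ (k + 1)
          = (a + b) / 2 ^ k →
        x = (Real.sqrt 2)⁻¹ ∧ y = (Real.sqrt 2)⁻¹) := by
  have hs2 : ((Real.sqrt 2)⁻¹ : ℝ) ^ 2 = 2⁻¹ := by
    rw [inv_pow, Real.sq_sqrt (by norm_num : (0:ℝ) ≤ 2)]
  have hpow1 : ((Real.sqrt 2)⁻¹ : ℝ) ^ (2 * k + 2) = ((2:ℝ)⁻¹) ^ (k + 1) := by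
    rw [show 2 * k + 2 = 2 * (k + 1) by ring, pow_mul, hs2]
  have hpow2 : ((Real.sqrt 2)⁻¹ : ℝ) ^ (k + 1) * ((Real.sqrt 2)⁻¹) ^ (k + 1)
      = ((2:ℝ)⁻¹) ^ (k + 1) := by
    rw [← pow_add, show (k + 1) + (k + 1) = 2 * (k + 1) by ring, pow_mul, hs2]
  have hval : a * (((Real.sqrt 2)⁻¹) ^ (2 * k + 2) + ((Real.sqrt 2)⁻¹) ^ (2 * k + 2))
        + 2 * b * ((Real.sqrt 2)⁻¹) ^ (k + 1) * ((Real.sqrt 2)⁻¹) ^ (k + 1)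
      = (a + b) / 2 ^ k := by
    rw [hpow1, mul_assoc, hpow2, inv_pow, pow_succ]
    have h2k : (0:ℝ) < 2 ^ k := by positivity
    field_simp
    ring
  refine ⟨fun x y hxy hx hy => (key_bound k hk a b ha hb hab x y hxy hx hy).1, hval,
    fun x y hxy hx hy heq => ?_⟩
  have hxeqy : x = y := by
    by_contra hne
    exact absurd heq (ne_of_lt ((key_bound k hk a b ha hb hab x y hxy hx hy).2 hne))
  have hx2 : x ^ 2 = 2⁻¹ := by rw [hxeqy] at hxy ⊢; linarith
  have hxx : x = (Real.sqrt 2)⁻¹ := by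
    rw [← Real.sqrt_inv, ← hx2, Real.sqrt_sq hx]
  exact ⟨hxx, hxeqy ▸ hxx⟩
end
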